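/- arXiv:1603.08116 — 2 statements merged into one kernel-verified Lean document; each statement's English description precedes it below -/
import Mathlib

section
/- Let t ≥ 1 and consider the ground set consisting of two disjoint copies of [t], written α_1,...,α_t and β_1,...,β_t. For i ∈ [t−1] let C_i = {α_{i+1},...,α_t} ∪ {β_1,...,β_i}, let C_t = {β_1,...,β_t}, for i ∈ [t−1] let D_i = {α_1,...,α_i} ∪ {β_{i+1},...,β_t}, and let D_t = {α_1,...,α_t}. Then a pair {α_v, β_w} hits all 2t sets C_1,...,C_t, D_1,...,D_t if and only if v = w. -/
/-- The weak-linker set `C_i = {α_{i+1},...,α_t} ∪ {β_1,...,β_i}` (with `C_t = {β_1,...,β_t}`),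
over ground set `Fin t ⊕ Fin t` (`inl` = α, `inr` = β), 0-indexed. -/
def Cset {t : ℕ} (i : Fin t) : Set (Fin t ⊕ Fin t) :=
  Sum.inl '' {j | i < j} ∪ Sum.inr '' {j | j ≤ i}

/-- The weak-linker set `D_i = {α_1,...,α_i} ∪ {β_{i+1},...,β_t}` (with `D_t = {α_1,...,α_t}`). -/
def Dset {t : ℕ} (i : Fin t) : Set (Fin t ⊕ Fin t) :=
  Sum.inl '' {j | j ≤ i} ∪ Sum.inr '' {j | i < j}

/-! Hitting `C_i` says `i < v ∨ w ≤ i`, hitting `D_i` says `v ≤ i ∨ i < w`. Taking `i = v` in the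
first family gives `w ≤ v` and `i = w` in the second gives `v ≤ w`; conversely, for `v = w` every
index `i` lies on one side of `v`. -/

theorem Set.pair_inter_nonempty_iff {α : Type*} {a b : α} {s : Set α} :
    (({a, b} : Set α) ∩ s).Nonempty ↔ a ∈ s ∨ b ∈ s := by
  simp [Set.inter_nonempty_iff_exists_left]

section Membership

variable {t : ℕ} {i j : Fin t}

@[simp] theorem inl_mem_Cset : Sum.inl j ∈ Cset i ↔ i < j := by simp [Cset]

@[simp] theorem inr_mem_Cset : Sum.inr j ∈ Cset i ↔ j ≤ i := by simp [Cset]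

@[simp] theorem inl_mem_Dset : Sum.inl j ∈ Dset i ↔ j ≤ i := by simp [Dset]

@[simp] theorem inr_mem_Dset : Sum.inr j ∈ Dset i ↔ i < j := by simp [Dset]

end Membership

theorem forall_lt_or_le_iff {α : Type*} [LinearOrder α] {v w : α} :
    (∀ i, i < v ∨ w ≤ i) ↔ w ≤ v :=
  ⟨fun h ↦ (h v).resolve_left (lt_irrefl v),
    fun hwv i ↦ (lt_or_ge i v).imp_right hwv.trans⟩

theorem weak_linker_pair_iff_general (t : ℕ) (v w : Fin t) :
    ((∀ i : Fin t,
        (({Sum.inl v, Sum.inr w} : Set (Fin t ⊕ Fin t)) ∩ Cset i).Nonempty) ∧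
     (∀ i : Fin t,
        (({Sum.inl v, Sum.inr w} : Set (Fin t ⊕ Fin t)) ∩ Dset i).Nonempty))
    ↔ v = w := by
  simp only [Set.pair_inter_nonempty_iff, inl_mem_Cset, inr_mem_Cset, inl_mem_Dset, inr_mem_Dset]
  have hD : (∀ i : Fin t, v ≤ i ∨ i < w) ↔ v ≤ w := by
    simpa only [or_comm] using forall_lt_or_le_iff (v := w) (w := v)
  rw [forall_lt_or_le_iff, hD, le_antisymm_iff, and_comm]

/-- A pair `{α_v, β_w}` hits all `2t` sets `C_1,...,C_t, D_1,...,D_t`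
if and only if `v = w`. -/
theorem weak_linker_pair_iff (t : ℕ) (ht : 1 ≤ t) (v w : Fin t) :
    ((∀ i : Fin t,
        (({Sum.inl v, Sum.inr w} : Set (Fin t ⊕ Fin t)) ∩ Cset i).Nonempty) ∧
     (∀ i : Fin t,
        (({Sum.inl v, Sum.inr w} : Set (Fin t ⊕ Fin t)) ∩ Dset i).Nonempty))
    ↔ v = w :=
  weak_linker_pair_iff_general t v w
end

section
/- Let t ≥ 1, let G = {c_1,...,c_t, d_1,...,d_t} be a set of guards and P = {x_1,...,x_t, y_1,...,y_{t−1}} a set of pockets, and let V ⊆ G × P be a visibility relation such that c_i V x_j ⟺ j < i, c_i V y_j ⟺ j ≥ i, d_i V x_j ⟺ j ≥ i, and d_i V y_j ⟺ j < i. Then a pair {c_v, d_w} covers all pockets {x_1,...,x_t, y_1,...,y_{t−1}} (every pocket is seen by c_v or by d_w) if and only if v = w. -/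
/-- Filter gadget, abstractly (0-indexed): guard `c_v` covers pocket `x_j` iff `j < v`
and pocket `y_j` iff `v ≤ j`; guard `d_w` covers `x_j` iff `w ≤ j` and `y_j` iff `j < w`.
Pockets are `x_j` for `j ∈ Fin t` and `y_j` for `j` with `j < t - 1`.
The pair `{c_v, d_w}` covers all pockets iff `v = w`. -/
theorem filter_gadget_pair_iff (t : ℕ) (ht : 1 ≤ t) (v w : Fin t) :
    ((∀ j : Fin t, j < v ∨ w ≤ j) ∧
     (∀ j : Fin t, (j : ℕ) < t - 1 → (v ≤ j ∨ j < w)))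
    ↔ v = w := by
  constructor
  · rintro ⟨h1, h2⟩
    -- first, w ≤ v from h1 at j = v
    have hwv : w ≤ v := by
      rcases h1 v with h | h
      · exact absurd h (lt_irrefl v)
      · exact h
    rcases eq_or_lt_of_le hwv with h | h
    · exact h.symm
    · -- w < v, use h2 at j = w; need (w : ℕ) < t - 1
      have hv : (v : ℕ) < t := v.isLt
      have hwv' : (w : ℕ) < (v : ℕ) := h
      rcases h2 w (by omega) with h' | h'
      · exact absurd h' (not_le.mpr h)
      · exact absurd h' (lt_irrefl w)
  · rintro rfl
    exact ⟨fun j => (lt_or_ge j v).imp id id, fun j _ => (le_or_gt v j).imp id id⟩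
end
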